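/- The set of complex numbers z satisfying conj(z)^4 = z^2 - 4z (i.e., the parameter choice a = -4, b = 0) is finite and has exactly 6 elements. -/

import Mathlib

/-!
Write `z = x + iy`. The imaginary part of the equation factors as `y (4xy² - 4x³ - 2x + 4) = 0`.
On the real axis the real part becomes `x (x³ - x + 4) = 0`, and the cubic has a single real
root. Off the axis the second factor fixes `y² = (4x³ + 2x - 4) / (4x)`; eliminating `y²` from the
real part leaves a sextic in `x` which is monotone on `[-1, -1/3]` and on `[1, ∞)` and has constant
sign elsewhere, so it has exactly two real roots. At both of them `y² > 0`, which gives two pairs of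
conjugate solutions, six solutions in all.
-/

open Set ComplexConjugate

theorem StrictMonoOn.exists_mem_Ioo_eq_zero_iff {f : ℝ → ℝ} {s : Set ℝ} {a b : ℝ}
    (hf : StrictMonoOn f s) (hcont : ContinuousOn f (Icc a b)) (hab : a ≤ b)
    (hs : Icc a b ⊆ s) (ha : f a < 0) (hb : 0 < f b) :
    ∃ c ∈ Ioo a b, ∀ x ∈ s, f x = 0 ↔ x = c := by
  obtain ⟨c, hc, hfc⟩ := intermediate_value_Icc hab hcont ⟨ha.le, hb.le⟩
  refine ⟨c, ⟨hc.1.lt_of_ne ?_, hc.2.lt_of_ne ?_⟩, fun x hx => ?_⟩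
  · rintro rfl; exact ha.ne hfc
  · rintro rfl; exact hb.ne' hfc
  · rw [← hfc]; exact hf.injOn.eq_iff hx (hs hc)

theorem Real.sq_eq_iff_eq_sqrt_or_eq_neg_sqrt {c y : ℝ} (hc : 0 ≤ c) :
    y ^ 2 = c ↔ y = √c ∨ y = -√c := by
  conv_lhs => rw [← Real.sq_sqrt hc]
  exact sq_eq_sq_iff_eq_or_eq_neg

namespace ConjQuartic

theorem exists_cubic_root : ∃ r ∈ Ioo (-2 : ℝ) (-1), ∀ x : ℝ, x ^ 3 - x + 4 = 0 ↔ x = r := by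
  have hmono : StrictMonoOn (fun x : ℝ => x ^ 3 - x + 4) (Iic (-1)) := by
    intro s (hs : s ≤ -1) t (ht : t ≤ -1) hst
    have hfac : (t ^ 3 - t + 4) - (s ^ 3 - s + 4) = (t - s) * (t ^ 2 + t * s + s ^ 2 - 1) := by ring
    have : 0 < t ^ 2 + t * s + s ^ 2 - 1 := by nlinarith
    nlinarith
  obtain ⟨r, hr, hroot⟩ := hmono.exists_mem_Ioo_eq_zero_iff (a := -2) (by fun_prop) (by norm_num)
    Icc_subset_Iic_self (by norm_num) (by norm_num)
  refine ⟨r, hr, fun x => ?_⟩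
  rcases le_or_gt x (-1) with hx | hx
  · exact hroot x hx
  · have : 0 < x ^ 3 - x + 4 := by nlinarith [sq_nonneg (x - 1), sq_nonneg x]
    exact iff_of_false this.ne' (by rintro rfl; linarith [hr.2])

def sextic (x : ℝ) : ℝ := 16 * x ^ 6 + 8 * x ^ 4 - 32 * x ^ 3 - 3 * x ^ 2 + 8 * x - 4

theorem hasDerivAt_sextic (x : ℝ) :
    HasDerivAt sextic (96 * x ^ 5 + 32 * x ^ 3 - 96 * x ^ 2 - 6 * x + 8) x := by
  refine (((((hasDerivAt_pow 6 x).const_mul 16).fun_add ((hasDerivAt_pow 4 x).const_mul 8)).fun_sub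
    ((hasDerivAt_pow 3 x).const_mul 32)).fun_sub ((hasDerivAt_pow 2 x).const_mul 3)).fun_add
    ((hasDerivAt_id' x).const_mul 8) |>.sub_const 4 |>.congr_deriv ?_
  norm_num
  ring

theorem continuous_sextic : Continuous sextic := by
  unfold sextic; fun_prop

theorem sextic_strictAntiOn : StrictAntiOn sextic (Icc (-1) (-1 / 3)) := by
  refine strictAntiOn_of_deriv_neg (convex_Icc _ _) continuous_sextic.continuousOn fun x hx => ?_
  obtain ⟨hlo, hhi⟩ : -1 < x ∧ x < -1 / 3 := by rwa [interior_Icc] at hx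
  rw [(hasDerivAt_sextic x).deriv]
  have hcube : x ^ 3 < 0 := by nlinarith [sq_nonneg x]
  have hfifth : x ^ 5 < 0 := by nlinarith [sq_nonneg (x ^ 2)]
  nlinarith [mul_nonneg (show (0 : ℝ) ≤ -x - 1 / 3 by linarith) (show (0 : ℝ) ≤ -x by linarith)]

theorem sextic_strictMonoOn : StrictMonoOn sextic (Ici 1) := by
  refine strictMonoOn_of_deriv_pos (convex_Ici _) continuous_sextic.continuousOn fun x hx => ?_
  rw [interior_Ici, mem_Ioi] at hx
  rw [(hasDerivAt_sextic x).deriv]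
  have hcube : 1 < x ^ 3 := one_lt_pow₀ hx (by norm_num)
  nlinarith [mul_pos (by positivity : (0 : ℝ) < x ^ 2) (by linarith : (0 : ℝ) < x ^ 3 - 1)]

theorem sextic_pos_of_le_neg_one {x : ℝ} (hx : x ≤ -1) : 0 < sextic x := by
  unfold sextic
  nlinarith [sq_nonneg (x + 1), sq_nonneg (x ^ 2 - 1), sq_nonneg (x ^ 3 + 1),
    mul_nonneg (mul_nonneg (show (0 : ℝ) ≤ -x - 1 by linarith) (show (0 : ℝ) ≤ -x - 1 by linarith))
      (show (0 : ℝ) ≤ -x by linarith)]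

theorem sextic_neg_of_mem_Icc {x : ℝ} (hx : x ∈ Icc (-1 / 3) 1) : sextic x < 0 := by
  obtain ⟨hlo, hhi⟩ := hx
  unfold sextic
  nlinarith [sq_nonneg (x + 1 / 3), sq_nonneg (x - 1), sq_nonneg x, sq_nonneg (x ^ 2 - 1),
    mul_nonneg (show (0 : ℝ) ≤ x + 1 / 3 by linarith) (show (0 : ℝ) ≤ 1 - x by linarith),
    sq_nonneg (x ^ 2 + x), sq_nonneg (x ^ 2 - x), sq_nonneg (x ^ 3 - 1)]

theorem exists_sextic_roots : ∃ x₁ ∈ Ioo (-1 : ℝ) (-1 / 3), ∃ x₂ ∈ Ioo (1 : ℝ) 2,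
    ∀ x, sextic x = 0 ↔ x = x₁ ∨ x = x₂ := by
  obtain ⟨x₁, hx₁, hroot₁⟩ := sextic_strictAntiOn.neg.exists_mem_Ioo_eq_zero_iff
    continuous_sextic.neg.continuousOn (by norm_num) subset_rfl
    (by norm_num [sextic]) (by norm_num [sextic])
  obtain ⟨x₂, hx₂, hroot₂⟩ := sextic_strictMonoOn.exists_mem_Ioo_eq_zero_iff (b := 2)
    continuous_sextic.continuousOn (by norm_num) Icc_subset_Ici_self
    (by norm_num [sextic]) (by norm_num [sextic])
  refine ⟨x₁, hx₁, x₂, hx₂, fun x => ?_⟩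
  rcases le_or_gt x (-1) with h₁ | h₁
  · exact iff_of_false (sextic_pos_of_le_neg_one h₁).ne'
      (by rintro (rfl | rfl) <;> linarith [hx₁.1, hx₂.1])
  rcases le_or_gt x (-1 / 3) with h₂ | h₂
  · rw [← neg_eq_zero, hroot₁ x ⟨h₁.le, h₂⟩, or_iff_left]
    rintro rfl; linarith [hx₂.1]
  rcases lt_or_ge x 1 with h₃ | h₃
  · exact iff_of_false (sextic_neg_of_mem_Icc ⟨h₂.le, h₃.le⟩).ne
      (by rintro (rfl | rfl) <;> linarith [hx₁.2, hx₂.1])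
  · rw [hroot₂ x h₃, or_iff_right]
    rintro rfl; linarith [hx₁.2]

noncomputable def imSq (x : ℝ) : ℝ := (4 * x ^ 3 + 2 * x - 4) / (4 * x)

theorem imSq_pos {x : ℝ} (hx : x < 0 ∨ 1 < x) : 0 < imSq x := by
  unfold imSq
  rcases hx with hx | hx
  · exact div_pos_of_neg_of_neg (by nlinarith [pow_two_nonneg x]) (by linarith)
  · exact div_pos (by nlinarith [one_lt_pow₀ hx (by norm_num : 3 ≠ 0)]) (by linarith)

theorem conj_pow_four_eq_iff_re_im (x y : ℝ) :
    conj (⟨x, y⟩ : ℂ) ^ 4 = ⟨x, y⟩ ^ 2 - 4 * ⟨x, y⟩ ↔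
      x ^ 4 - 6 * x ^ 2 * y ^ 2 + y ^ 4 - x ^ 2 + y ^ 2 + 4 * x = 0 ∧
      y * (4 * x * y ^ 2 - 4 * x ^ 3 - 2 * x + 4) = 0 := by
  simp only [Complex.ext_iff, pow_succ, pow_zero, one_mul, Complex.mul_re, Complex.mul_im,
    Complex.sub_re, Complex.sub_im, Complex.conj_re, Complex.conj_im, Complex.re_ofNat,
    Complex.im_ofNat]
  constructor <;> rintro ⟨h₁, h₂⟩ <;> exact ⟨by linear_combination h₁, by linear_combination h₂⟩

theorem conj_pow_four_eq_iff (x y : ℝ) :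
    conj (⟨x, y⟩ : ℂ) ^ 4 = ⟨x, y⟩ ^ 2 - 4 * ⟨x, y⟩ ↔
      (y = 0 ∧ x * (x ^ 3 - x + 4) = 0) ∨ (y ≠ 0 ∧ sextic x = 0 ∧ y ^ 2 = imSq x) := by
  rw [conj_pow_four_eq_iff_re_im]
  rcases eq_or_ne y 0 with rfl | hy
  · simp only [true_and, ne_eq, not_true_eq_false, false_and, or_false, zero_mul, and_true]
    constructor <;> intro h <;> linear_combination h
  simp only [hy, false_and, false_or, ne_eq, not_false_eq_true, true_and, mul_eq_zero]
  have hq : y ^ 2 = imSq x ↔ 4 * x * y ^ 2 - 4 * x ^ 3 - 2 * x + 4 = 0 := by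
    rcases eq_or_ne x 0 with rfl | hx
    · simp [imSq, hy]
    · rw [imSq, eq_div_iff (by positivity)]
      constructor <;> intro h <;> linear_combination h
  rw [hq]
  refine and_congr_left fun hG => ?_
  have hx : x ≠ 0 := by rintro rfl; norm_num at hG
  have helim : 16 * x ^ 2 * (x ^ 4 - 6 * x ^ 2 * y ^ 2 + y ^ 4 - x ^ 2 + y ^ 2 + 4 * x) =
      -4 * sextic x := by
    unfold sextic; linear_combination (4 * x * y ^ 2 - 20 * x ^ 3 + 6 * x - 4) * hG
  constructor <;> intro h
  · simpa [h] using helim.symm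
  · simpa [h, hx] using helim

end ConjQuartic

open ConjQuartic in
/-- the equation `conj z ^ 4 = z ^ 2 - 4 z` has exactly 6 complex solutions. -/
theorem stmt_7 :
    {z : ℂ | (starRingEnd ℂ z) ^ 4 = z ^ 2 - 4 * z}.Finite ∧
      {z : ℂ | (starRingEnd ℂ z) ^ 4 = z ^ 2 - 4 * z}.ncard = 6 := by
  obtain ⟨r, ⟨hr₁, hr₂⟩, hcubic⟩ := exists_cubic_root
  obtain ⟨x₁, ⟨hx₁₁, hx₁₂⟩, x₂, ⟨hx₂₁, hx₂₂⟩, hsextic⟩ := exists_sextic_roots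
  have hq₁ : 0 < imSq x₁ := imSq_pos (.inl (by linarith))
  have hq₂ : 0 < imSq x₂ := imSq_pos (.inr hx₂₁)
  set y₁ := √(imSq x₁)
  set y₂ := √(imSq x₂)
  have hy₁ : 0 < y₁ := Real.sqrt_pos.2 hq₁
  have hy₂ : 0 < y₂ := Real.sqrt_pos.2 hq₂
  have hS : {z : ℂ | conj z ^ 4 = z ^ 2 - 4 * z} =
      {⟨0, 0⟩, ⟨r, 0⟩, ⟨x₁, y₁⟩, ⟨x₁, -y₁⟩, ⟨x₂, y₂⟩, ⟨x₂, -y₂⟩} := by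
    ext ⟨x, y⟩
    have := Real.sq_eq_iff_eq_sqrt_or_eq_neg_sqrt (y := y) hq₁.le
    have := Real.sq_eq_iff_eq_sqrt_or_eq_neg_sqrt (y := y) hq₂.le
    simp only [mem_ofPred_eq, conj_pow_four_eq_iff, mul_eq_zero, hcubic, hsextic, mem_insert_iff,
      mem_singleton_iff, Complex.mk.injEq]
    grind
  rw [hS, ncard_insert_of_notMem, ncard_insert_of_notMem, ncard_insert_of_notMem,
    ncard_insert_of_notMem, ncard_insert_of_notMem, ncard_singleton]
  · exact ⟨toFinite _, rfl⟩
  all_goals simp only [mem_insert_iff, mem_singleton_iff, Complex.mk.injEq]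
  all_goals grind
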